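/- arXiv:1405.2961 — 5 statements merged into one kernel-verified Lean document; each statement's English description precedes it below -/
import Mathlib

section
/- If μ is a hyperbolic (i.e. (-∞)-concave) Radon probability measure on a locally convex Hausdorff real topological vector space E, then for any additive subgroup H of E, the inner measure μ_*(H) = sup{μ(K) : K ⊆ H compact} is either 0 or 1. In particular, any μ-measurable affine subspace of E has μ-measure either 0 or 1. -/
open MeasureTheory Set Pointwise
open scoped ENNReal NNReal

/-- A measure `μ` on a topological vector space is hyperbolic (i.e. `(-∞)`-concave, or
convex) if for all nonempty compact sets `A, B` and all `t ∈ (0,1)`,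
`μ((1-t)•A + t•B) ≥ min(μ(A), μ(B))`. -/
def Hyperbolic {E : Type*} [AddCommMonoid E] [Module ℝ E] [TopologicalSpace E]
    [MeasurableSpace E] (μ : Measure E) : Prop :=
  ∀ A B : Set E, A.Nonempty → B.Nonempty → IsCompact A → IsCompact B →
    ∀ t : ℝ, t ∈ Set.Ioo (0 : ℝ) 1 →
      min (μ A) (μ B) ≤ μ ((1 - t) • A + t • B)

/-- The inner measure `μ_*(S) = sup{μ(K) : K ⊆ S compact}`. -/
noncomputable def innerMeasCompact {E : Type*} [TopologicalSpace E] [MeasurableSpace E]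
    (μ : Measure E) (S : Set E) : ℝ≥0∞ :=
  ⨆ (K : Set E) (_ : IsCompact K) (_ : K ⊆ S), μ K

/-!
Call `S` extrapolation-closed for the ratio `τ` if `a ∈ S` and `(1 - τ) a + τ b ∈ S`
force `b ∈ S`; subgroups are so for `τ = 1/k`, affine subspaces for every `τ ≠ 0`. If compact
sets `A ⊆ S` and `B ⊆ Sᶜ` had positive measure, hyperbolicity would give the sets
`Cₙ = (1 - τₙ) A + τₙ B` (with `τₙ → 0`) measure at least `min (μ A) (μ B)`, so some point `x`
lies in infinitely many of them. Such an `x` lies in `A ⊆ S`, because `Cₙ` shrinks to `A`, while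
every point of `Cₙ` lies outside `S` by extrapolation-closedness. Hence a null-measurable
extrapolation-closed set has measure `0` or `1`. For a subgroup `H` with `μ_*(H) > 0` this is
applied to the σ-compact subgroup generated by a compact `K ⊆ H` of positive measure.
-/

open Filter Topology

/-- Here `n • s` is the `n`-fold Minkowski sum `s + ⋯ + s`, not the dilate `{n • x | x ∈ s}`. -/
theorem AddSubmonoid.coe_closure_eq_iUnion_nsmul {M : Type*} [AddMonoid M] (s : Set M) :
    (AddSubmonoid.closure s : Set M) = ⋃ n : ℕ, n • s := by
  refine (iUnion_subset fun n => AddSubmonoid.nsmul_subset AddSubmonoid.subset_closure).antisymm' ?_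
  intro x hx
  induction hx using AddSubmonoid.closure_induction with
  | mem x hx => exact mem_iUnion.2 ⟨1, by rwa [one_nsmul]⟩
  | zero => exact mem_iUnion.2 ⟨0, by simp⟩
  | add x y _ _ hx hy =>
    obtain ⟨m, hm⟩ := mem_iUnion.1 hx
    obtain ⟨n, hn⟩ := mem_iUnion.1 hy
    exact mem_iUnion.2 ⟨m + n, by rw [add_nsmul]; exact add_mem_add hm hn⟩

theorem IsCompact.nsmul {M : Type*} [AddMonoid M] [TopologicalSpace M] [ContinuousAdd M]
    {s : Set M} (hs : IsCompact s) : ∀ n : ℕ, IsCompact (n • s)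
  | 0 => by simp
  | n + 1 => by rw [succ_nsmul]; exact (hs.nsmul n).add hs

theorem AddSubgroup.isSigmaCompact_closure {G : Type*} [AddGroup G] [TopologicalSpace G]
    [IsTopologicalAddGroup G] {K : Set G} (hK : IsCompact K) :
    IsSigmaCompact (AddSubgroup.closure K : Set G) := by
  rw [← AddSubgroup.coe_toAddSubmonoid, AddSubgroup.closure_toAddSubmonoid]
  exact ⟨_, (hK.union hK.neg).nsmul, (AddSubmonoid.coe_closure_eq_iUnion_nsmul _).symm⟩

theorem IsSigmaCompact.measurableSet {X : Type*} [TopologicalSpace X] [T2Space X]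
    [MeasurableSpace X] [OpensMeasurableSpace X] {s : Set X} (hs : IsSigmaCompact s) :
    MeasurableSet s := by
  obtain ⟨K, hK, rfl⟩ := hs
  exact .iUnion fun n => (hK n).measurableSet

section InnerMeasure

variable {X : Type*} [TopologicalSpace X] [MeasurableSpace X] {μ : Measure X} {S T : Set X}

theorem innerMeasCompact_mono (hST : S ⊆ T) : innerMeasCompact μ S ≤ innerMeasCompact μ T :=
  iSup₂_mono fun _ _ => iSup_le fun hKS => le_iSup_of_le (hKS.trans hST) le_rfl

theorem innerMeasCompact_le_measure : innerMeasCompact μ S ≤ μ S :=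
  iSup_le fun _ => iSup₂_le fun _ hKS => measure_mono hKS

theorem innerMeasCompact_eq_zero_iff :
    innerMeasCompact μ S = 0 ↔ ∀ K, IsCompact K → K ⊆ S → μ K = 0 := by
  simp only [innerMeasCompact, ENNReal.iSup_eq_zero]

theorem MeasurableSet.innerMeasCompact_eq [μ.InnerRegular] (hS : MeasurableSet S) :
    innerMeasCompact μ S = μ S := by
  rw [hS.measure_eq_iSup_isCompact μ, innerMeasCompact]
  exact iSup_congr fun _ => iSup_comm

theorem MeasureTheory.NullMeasurableSet.exists_isCompact_measure_ne_zero [μ.InnerRegular]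
    (hS : NullMeasurableSet S μ) (hμS : μ S ≠ 0) : ∃ K ⊆ S, IsCompact K ∧ μ K ≠ 0 := by
  obtain ⟨T, hTS, hT, hTS_ae⟩ := hS.exists_measurable_subset_ae_eq
  obtain ⟨K, hKT, hK, hμK⟩ :=
    hT.exists_lt_isCompact (pos_iff_ne_zero.2 (by rwa [measure_congr hTS_ae]))
  exact ⟨K, hKT.trans hTS, hK, hμK.ne'⟩

end InnerMeasure

theorem MeasureTheory.le_measure_limsup_atTop {α : Type*} [MeasurableSpace α] {μ : Measure α}
    [IsFiniteMeasure μ] {s : ℕ → Set α} (hs : ∀ n, NullMeasurableSet (s n) μ) {c : ℝ≥0∞}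
    (hc : ∀ n, c ≤ μ (s n)) : c ≤ μ (limsup s atTop) := by
  rw [limsup_eq_iInf_iSup_of_nat]
  have hanti : Antitone fun n => ⋃ i ≥ n, s i := fun m n hmn =>
    biUnion_subset_biUnion_left fun i hi => le_trans hmn hi
  refine ge_of_tendsto (tendsto_measure_iInter_atTop
    (fun n => .biUnion (to_countable _) fun i _ => hs i) hanti ⟨0, measure_ne_top μ _⟩)
    (Eventually.of_forall fun n => (hc n).trans (measure_mono ?_))
  exact subset_biUnion_of_mem (u := s) (le_refl n)

section Extrapolation

variable {E : Type*} [AddCommGroup E] [Module ℝ E]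

def ExtrapolationClosed (τ : ℝ) (S : Set E) : Prop :=
  ∀ a ∈ S, ∀ b, (1 - τ) • a + τ • b ∈ S → b ∈ S

theorem AddSubgroup.extrapolationClosed_inv_natCast (G : AddSubgroup E) {k : ℕ} (hk : k ≠ 0) :
    ExtrapolationClosed (k : ℝ)⁻¹ (G : Set E) := by
  intro a ha b hc
  have hb : b = (k : ℤ) • ((1 - (k : ℝ)⁻¹) • a + (k : ℝ)⁻¹ • b) - ((k : ℤ) - 1) • a := by
    simp only [← Int.cast_smul_eq_zsmul ℝ, Int.cast_natCast, Int.cast_sub, Int.cast_one]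
    match_scalars
    · field_simp
    · field_simp; ring
  rw [hb]
  exact G.sub_mem (G.zsmul_mem hc _) (G.zsmul_mem ha _)

theorem AffineSubspace.extrapolationClosed (W : AffineSubspace ℝ E) {τ : ℝ} (hτ : τ ≠ 0) :
    ExtrapolationClosed τ (W : Set E) := by
  intro a ha b hc
  have hb : b = AffineMap.lineMap a ((1 - τ) • a + τ • b) τ⁻¹ := by
    rw [AffineMap.lineMap_apply_module]
    match_scalars
    · field_simp
    · field_simp; ring
  rw [hb]
  exact AffineMap.lineMap_mem _ ha hc

variable [TopologicalSpace E] [ContinuousAdd E] [ContinuousSMul ℝ E]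

theorem limsup_convexCombination_subset [T1Space E] {ι : Type*} {l : Filter ι} {t : ι → ℝ}
    (ht : Tendsto t l (𝓝 0)) {A B : Set E} (hA : IsCompact A) (hB : IsCompact B) :
    limsup (fun i => (1 - t i) • A + t i • B) l ⊆ A := by
  intro x hx
  by_contra hxA
  have hnear : ∀ᶠ τ in 𝓝 (0 : ℝ), ∀ p ∈ A ×ˢ B, (1 - τ) • p.1 + τ • p.2 ≠ x := by
    refine (hA.prod hB).eventually_forall_of_forall_eventually fun p hp => ?_
    have hcont : Continuous fun z : ℝ × E × E => (1 - z.1) • z.2.1 + z.1 • z.2.2 := by fun_prop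
    refine hcont.continuousAt.eventually_ne ?_
    simpa using ne_of_mem_of_not_mem hp.1 hxA
  obtain ⟨i, hxi, hi⟩ :=
    ((mem_limsup_iff_frequently_mem.1 hx).and_eventually (ht.eventually hnear)).exists
  obtain ⟨_, ⟨a, ha, rfl⟩, _, ⟨b, hb, rfl⟩, hab⟩ := hxi
  exact hi (a, b) ⟨ha, hb⟩ hab

variable [T2Space E] [MeasurableSpace E] [BorelSpace E] {μ : Measure E}

theorem Hyperbolic.measure_eq_zero_or_measure_eq_zero [IsFiniteMeasure μ] (hμ : Hyperbolic μ)
    {t : ℕ → ℝ} (ht : ∀ n, t n ∈ Ioo 0 1) (ht0 : Tendsto t atTop (𝓝 0)) {S : Set E}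
    (hS : ∀ n, ExtrapolationClosed (t n) S) {A B : Set E} (hA : IsCompact A) (hB : IsCompact B)
    (hAS : A ⊆ S) (hBS : B ⊆ Sᶜ) : μ A = 0 ∨ μ B = 0 := by
  by_contra! h
  have hlim : min (μ A) (μ B) ≤ μ (limsup (fun n => (1 - t n) • A + t n • B) atTop) :=
    le_measure_limsup_atTop
      (fun n => ((hA.smul _).add (hB.smul _)).measurableSet.nullMeasurableSet)
      fun n => hμ A B (nonempty_of_measure_ne_zero h.1) (nonempty_of_measure_ne_zero h.2) hA hB
        (t n) (ht n)
  obtain ⟨x, hx⟩ := nonempty_of_measure_ne_zero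
    ((lt_min (pos_iff_ne_zero.2 h.1) (pos_iff_ne_zero.2 h.2)).trans_le hlim).ne'
  have hxS : x ∈ S := hAS (limsup_convexCombination_subset ht0 hA hB hx)
  obtain ⟨n, _, ⟨a, ha, rfl⟩, _, ⟨b, hb, rfl⟩, rfl⟩ := (mem_limsup_iff_frequently_mem.1 hx).exists
  exact hBS hb (hS n a (hAS ha) b hxS)

theorem Hyperbolic.measure_eq_zero_or_one [IsProbabilityMeasure μ] [μ.InnerRegular]
    (hμ : Hyperbolic μ) {t : ℕ → ℝ} (ht : ∀ n, t n ∈ Ioo 0 1) (ht0 : Tendsto t atTop (𝓝 0))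
    {S : Set E} (hS : ∀ n, ExtrapolationClosed (t n) S) (hSm : NullMeasurableSet S μ) :
    μ S = 0 ∨ μ S = 1 := by
  by_contra! h
  have hSc : μ Sᶜ ≠ 0 := by
    rw [prob_compl_eq_one_sub₀ hSm]
    exact (tsub_pos_of_lt (prob_le_one.lt_of_ne h.2)).ne'
  obtain ⟨A, hAS, hA, hμA⟩ := hSm.exists_isCompact_measure_ne_zero h.1
  obtain ⟨B, hBS, hB, hμB⟩ := hSm.compl.exists_isCompact_measure_ne_zero hSc
  exact (hμ.measure_eq_zero_or_measure_eq_zero ht ht0 hS hA hB hAS hBS).elim hμA hμB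

end Extrapolation

theorem zero_one_law_for_hyperbolic_measures_general
    {E : Type*} [AddCommGroup E] [Module ℝ E] [TopologicalSpace E] [IsTopologicalAddGroup E]
    [ContinuousSMul ℝ E] [T2Space E]
    [MeasurableSpace E] [BorelSpace E]
    (μ : Measure E) [IsProbabilityMeasure μ] [μ.InnerRegular] (hμ : Hyperbolic μ) :
    (∀ H : AddSubgroup E, innerMeasCompact μ (H : Set E) = 0 ∨
      innerMeasCompact μ (H : Set E) = 1) ∧
    (∀ W : AffineSubspace ℝ E, NullMeasurableSet (W : Set E) μ →
      μ (W : Set E) = 0 ∨ μ (W : Set E) = 1) := by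
  set t : ℕ → ℝ := fun n => ((n + 2 : ℕ) : ℝ)⁻¹
  have ht : ∀ n, t n ∈ Ioo 0 1 := fun n =>
    ⟨by positivity, inv_lt_one_of_one_lt₀ (by norm_cast; omega)⟩
  have ht0 : Tendsto t atTop (𝓝 0) :=
    tendsto_inv_atTop_zero.comp (tendsto_natCast_atTop_atTop.comp (tendsto_add_atTop_nat 2))
  refine ⟨fun H => ?_, fun W hW =>
    hμ.measure_eq_zero_or_one ht ht0 (fun n => W.extrapolationClosed (ht n).1.ne') hW⟩
  refine or_iff_not_imp_left.2 fun h0 => ?_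
  obtain ⟨K, hK, hKH, hμK⟩ : ∃ K, IsCompact K ∧ K ⊆ H ∧ μ K ≠ 0 := by
    simpa [innerMeasCompact_eq_zero_iff] using h0
  set G := AddSubgroup.closure K
  have hGm : MeasurableSet (G : Set E) := (AddSubgroup.isSigmaCompact_closure hK).measurableSet
  have hG : μ G = 1 :=
    (hμ.measure_eq_zero_or_one ht ht0 (fun n => G.extrapolationClosed_inv_natCast (by omega))
      hGm.nullMeasurableSet).resolve_left
      fun h => hμK (measure_mono_null AddSubgroup.subset_closure h)
  refine le_antisymm (innerMeasCompact_le_measure.trans prob_le_one) ?_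
  calc 1 = innerMeasCompact μ G := by rw [hGm.innerMeasCompact_eq, hG]
    _ ≤ innerMeasCompact μ H := innerMeasCompact_mono ((AddSubgroup.closure_le H).2 hKH)

/-- **Borell's zero-one law.** If `μ` is a hyperbolic Radon probability measure on a locally
convex Hausdorff space `E`, then for any additive subgroup `H ⊆ E` the inner measure
`μ_*(H)` is `0` or `1`; in particular any `μ`-measurable affine subspace of `E` has
`μ`-measure `0` or `1`. -/
theorem zero_one_law_for_hyperbolic_measures
    {E : Type*} [AddCommGroup E] [Module ℝ E] [TopologicalSpace E] [IsTopologicalAddGroup E]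
    [ContinuousSMul ℝ E] [LocallyConvexSpace ℝ E] [T2Space E]
    [MeasurableSpace E] [BorelSpace E]
    (μ : Measure E) [IsProbabilityMeasure μ] [μ.InnerRegular] (hμ : Hyperbolic μ) :
    (∀ H : AddSubgroup E, innerMeasCompact μ (H : Set E) = 0 ∨
      innerMeasCompact μ (H : Set E) = 1) ∧
    (∀ W : AffineSubspace ℝ E, NullMeasurableSet (W : Set E) μ →
      μ (W : Set E) = 0 ∨ μ (W : Set E) = 1) :=
  zero_one_law_for_hyperbolic_measures_general μ hμ
end

section
/- For α > 0, any α-concave finite Radon measure μ on a locally convex Hausdorff real topological vector space E is finite dimensional and compactly supported; that is, the support of μ is a compact set contained in a finite-dimensional affine subspace of E. -/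
open MeasureTheory Set Pointwise
open scoped ENNReal NNReal

/-- The generalized `α`-mean of two nonnegative extended reals with weights `1 - t` and `t`,
for `α ∈ [-∞, 1]`. -/
noncomputable def alphaMean (α : EReal) (t : ℝ) (a b : ℝ≥0∞) : ℝ≥0∞ :=
  if α = ⊥ then min a b
  else if α = 0 then a ^ (1 - t) * b ^ t
  else (ENNReal.ofReal (1 - t) * a ^ α.toReal + ENNReal.ofReal t * b ^ α.toReal) ^ (1 / α.toReal)

/-- `α`-concavity of a measure: for all nonempty compact `A, B` and `t ∈ (0,1)`,
`μ((1-t)•A + t•B) ≥ M_α^t(μ(A), μ(B))`. -/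
def AlphaConcave {E : Type*} [AddCommMonoid E] [Module ℝ E] [TopologicalSpace E]
    [MeasurableSpace E] (α : EReal) (μ : Measure E) : Prop :=
  ∀ A B : Set E, A.Nonempty → B.Nonempty → IsCompact A → IsCompact B →
    ∀ t : ℝ, t ∈ Set.Ioo (0 : ℝ) 1 →
      alphaMean α t (μ A) (μ B) ≤ μ ((1 - t) • A + t • B)

/-- The support of a measure: the set of points all of whose open neighbourhoods have
positive measure. -/
def measSupport {E : Type*} [TopologicalSpace E] [MeasurableSpace E] (μ : Measure E) :
    Set E :=
  {x | ∀ U : Set E, IsOpen U → x ∈ U → 0 < μ U}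

/-!
For `α > 0`, applying `α`-concavity to compact sets `A, B` and discarding the `A`-term gives
`μ ((1 - t) • A + t • B) ≥ t ^ (1 / α) * μ B`: contracting a set of positive mass towards another
one costs at most the factor `t ^ (1 / α)`, whatever the position of `A`.

Compactness: let `K` be a compact set carrying almost all the mass. For a point `x` of the
support and a neighbourhood `U` of `x`, the set `(1 - t) • U + t • K` has mass comparable to
`μ K`, so it must meet `K`; hence `x` lies in the compact set `(1 - t)⁻¹ • (K - t • K)`.

Finite dimension: the support `S` is convex. If it were not contained in a finite-dimensional affine
subspace, it would contain a simplex of dimension `N > 1 / α + 1`, and continuous linear forms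
dual to its edges map it onto a standard simplex of `ℝ^N`. Around the `m^N` points of a grid of
mesh `1 / (N m)` in that simplex, the preimages of disjoint balls each carry mass at least
`c m ^ (-1 / α)`, so `μ E ≥ c m ^ (N - 1 / α) → ∞`.
-/

theorem alphaMean_coe_of_pos {α : ℝ} (hα : 0 < α) (t : ℝ) (a b : ℝ≥0∞) :
    alphaMean α t a b
      = (ENNReal.ofReal (1 - t) * a ^ α + ENNReal.ofReal t * b ^ α) ^ (1 / α) := by
  rw [alphaMean, if_neg (EReal.coe_ne_bot α), if_neg (mod_cast hα.ne'), EReal.toReal_coe]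

theorem AlphaConcave.rpow_mul_le {E : Type*} [AddCommMonoid E] [Module ℝ E] [TopologicalSpace E]
    [MeasurableSpace E] {α : ℝ} {μ : Measure E} (hμ : AlphaConcave α μ) (hα : 0 < α)
    {A B : Set E} (hA : A.Nonempty) (hB : B.Nonempty) (hAc : IsCompact A) (hBc : IsCompact B)
    {t : ℝ} (ht : t ∈ Ioo 0 1) :
    ENNReal.ofReal t ^ (1 / α) * μ B ≤ μ ((1 - t) • A + t • B) := by
  refine le_trans ?_ (hμ A B hA hB hAc hBc t ht)
  calc ENNReal.ofReal t ^ (1 / α) * μ B = (ENNReal.ofReal t * μ B ^ α) ^ (1 / α) := by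
        rw [ENNReal.mul_rpow_of_nonneg _ _ (by positivity), ← ENNReal.rpow_mul,
          mul_one_div_cancel hα.ne', ENNReal.rpow_one]
    _ ≤ alphaMean α t (μ A) (μ B) := by
        rw [alphaMean_coe_of_pos hα]
        gcongr
        exact le_add_self

theorem measSupport_eq_support {X : Type*} [TopologicalSpace X] [MeasurableSpace X]
    (μ : Measure X) : measSupport μ = μ.support := by
  rw [Measure.support_eq_forall_isOpen]
  exact Set.ext fun x => forall_congr' fun U => forall_comm

theorem Convex.add_sum_smul_sub_mem {𝕜 E ι : Type*} [Field 𝕜] [LinearOrder 𝕜]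
    [IsStrictOrderedRing 𝕜] [AddCommGroup E] [Module 𝕜 E] [Fintype ι] {s : Set E}
    (hs : Convex 𝕜 s) {x : E} (hx : x ∈ s) {y : ι → E} (hy : ∀ i, y i ∈ s) {w : ι → 𝕜}
    (hw : ∀ i, 0 ≤ w i) (hw1 : ∑ i, w i ≤ 1) : x + ∑ i, w i • (y i - x) ∈ s := by
  have := hs.sum_mem (t := Finset.univ) (w := fun o : Option ι => o.elim (1 - ∑ i, w i) w)
    (z := fun o => o.elim x y) (fun o _ => o.rec (sub_nonneg.2 hw1) hw)
    (by simp [Fintype.sum_option]) (fun o _ => o.rec hx hy)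
  convert this using 1
  simp only [Fintype.sum_option, Option.elim, smul_sub, Finset.sum_sub_distrib, ← Finset.sum_smul,
    sub_smul, one_smul]
  abel

theorem exists_continuousLinearMap_apply_eq_single {R V ι : Type*} [Field R] [TopologicalSpace R]
    [IsTopologicalRing R] [AddCommGroup V] [TopologicalSpace V] [Module R V] [SeparatingDual R V]
    [Fintype ι] [DecidableEq ι] {v : ι → V} (hv : LinearIndependent R v) :
    ∃ F : V →L[R] (ι → R), ∀ j, F (v j) = Pi.single j 1 := by
  have hsurj := SeparatingDual.dualMap_surjective_iff.2
    (linearIndependent_iff_injective_fintypeLinearCombination.1 hv)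
  choose g hg using fun i => hsurj (LinearMap.proj i)
  refine ⟨ContinuousLinearMap.pi g, fun j => funext fun i => ?_⟩
  have := LinearMap.congr_fun (hg i) (Pi.single j 1)
  simpa using this

theorem exists_linearIndependent_fin_of_not_finiteDimensional_span {K V : Type*} [DivisionRing K]
    [AddCommGroup V] [Module K V] {s : Set V}
    (hs : ¬FiniteDimensional K (Submodule.span K s)) (n : ℕ) :
    ∃ v : Fin n → V, (∀ i, v i ∈ s) ∧ LinearIndependent K v := by
  obtain ⟨b, hbs, hspan, hb⟩ := exists_linearIndependent K s
  have hbinf : b.Infinite := fun hfin => hs (hspan ▸ FiniteDimensional.span_of_finite K hfin)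
  let g := hbinf.natEmbedding
  exact ⟨fun i => g i, fun i => hbs (g i).2,
    hb.comp (fun i : Fin n => g i) fun i j h => Fin.val_injective (g.injective h)⟩

theorem ENNReal.not_forall_pow_mul_rpow_div_mul_le {α b : ℝ} (hα : 0 < α) (hb : 0 < b) {N : ℕ}
    (hN : 1 / α + 1 ≤ N) {C D : ℝ≥0∞} (hC : C ≠ 0) (hD : D ≠ ⊤) :
    ¬∀ m : ℕ, 0 < m → (m : ℝ≥0∞) ^ N * (ENNReal.ofReal (b / m) ^ (1 / α) * C) ≤ D := by
  intro h
  have hlin : ∀ m : ℕ, 0 < m → (m : ℝ≥0∞) * (ENNReal.ofReal (b ^ (1 / α)) * C) ≤ D := by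
    intro m hm
    have hm1 : (1 : ℝ) ≤ m := by exact_mod_cast hm
    have hm0 : (0 : ℝ) < m := by positivity
    refine le_trans ?_ (h m hm)
    rw [← mul_assoc, ← mul_assoc]
    gcongr ?_ * _
    rw [ENNReal.ofReal_rpow_of_nonneg (by positivity) (by positivity), ← ENNReal.ofReal_natCast,
      ← ENNReal.ofReal_pow hm0.le, ← ENNReal.ofReal_mul hm0.le,
      ← ENNReal.ofReal_mul (by positivity)]
    refine ENNReal.ofReal_le_ofReal ?_
    calc (m : ℝ) * b ^ (1 / α) = (m : ℝ) ^ (1 + 1 / α) / (m : ℝ) ^ (1 / α) * b ^ (1 / α) := by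
          rw [Real.rpow_add hm0, Real.rpow_one]
          field_simp
      _ ≤ (m : ℝ) ^ (N : ℝ) / (m : ℝ) ^ (1 / α) * b ^ (1 / α) := by
          gcongr
          linarith
      _ = (m : ℝ) ^ N * (b / m) ^ (1 / α) := by
          rw [Real.rpow_natCast, Real.div_rpow hb.le hm0.le]
          ring
  have hX : ENNReal.ofReal (b ^ (1 / α)) * C ≠ 0 :=
    mul_ne_zero (ENNReal.ofReal_pos.2 (by positivity)).ne' hC
  obtain ⟨n, hn⟩ := ENNReal.exists_nat_mul_gt hX hD
  rcases Nat.eq_zero_or_pos n with rfl | hn0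
  · simp at hn
  exact (hlin n hn0).not_gt hn

section AlphaConcave

variable {E : Type*} [AddCommGroup E] [Module ℝ E] [TopologicalSpace E] [MeasurableSpace E]
  [OpensMeasurableSpace E] {α : ℝ} {μ : Measure E} [μ.InnerRegular]

theorem AlphaConcave.rpow_mul_le_of_smul_add_subset (hμ : AlphaConcave α μ) (hα : 0 < α)
    {y : E} (hy : y ∈ measSupport μ) {V : Set E} (hV : IsOpen V) (hyV : y ∈ V)
    {K : Set E} (hK : IsCompact K) (hKne : K.Nonempty) {t : ℝ} (ht : t ∈ Ioo 0 1) {U : Set E}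
    (hU : (1 - t) • V + t • K ⊆ U) :
    ENNReal.ofReal t ^ (1 / α) * μ K ≤ μ U := by
  obtain ⟨B, hBV, hB, hBpos⟩ := hV.measurableSet.exists_lt_isCompact (hy V hV hyV)
  calc ENNReal.ofReal t ^ (1 / α) * μ K ≤ μ ((1 - t) • B + t • K) :=
        hμ.rpow_mul_le hα (nonempty_of_measure_ne_zero hBpos.ne') hKne hB hK ht
    _ ≤ μ U := measure_mono ((add_subset_add_right (smul_set_mono hBV)).trans hU)

theorem AlphaConcave.convex_measSupport [ContinuousAdd E] [ContinuousSMul ℝ E]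
    (hμ : AlphaConcave α μ) (hα : 0 < α) : Convex ℝ (measSupport μ) := by
  refine convex_iff_forall_pos.2 fun x hx y hy a t ha ht hat U hU hzU => ?_
  obtain rfl : a = 1 - t := by linarith
  have hcont : Continuous fun p : E × E => (1 - t) • p.1 + t • p.2 := by fun_prop
  obtain ⟨V, W, hV, hW, hxV, hyW, hVW⟩ :=
    isOpen_prod_iff.1 (hU.preimage hcont) x y hzU
  obtain ⟨B, hBW, hB, hBpos⟩ := hW.measurableSet.exists_lt_isCompact (hy W hW hyW)
  have hsub : (1 - t) • V + t • B ⊆ U := by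
    rintro _ ⟨_, ⟨p, hp, rfl⟩, _, ⟨q, hq, rfl⟩, rfl⟩
    exact hVW (mk_mem_prod hp (hBW hq))
  calc (0 : ℝ≥0∞) < ENNReal.ofReal t ^ (1 / α) * μ B := by
        have : 0 < ENNReal.ofReal t := ENNReal.ofReal_pos.2 ht
        exact ENNReal.mul_pos (ENNReal.rpow_pos this ENNReal.ofReal_ne_top).ne' hBpos.ne'
    _ ≤ μ U := hμ.rpow_mul_le_of_smul_add_subset hα hx hV hxV hB
        (nonempty_of_measure_ne_zero hBpos.ne') ⟨ht, by linarith⟩ hsub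

theorem AlphaConcave.measSupport_subset_smul_add_smul [T2Space E] [ContinuousAdd E]
    [ContinuousConstSMul ℝ E]
    (hμ : AlphaConcave α μ) (hα : 0 < α) {K : Set E} (hK : IsCompact K) (hKne : K.Nonempty)
    {t : ℝ} (ht : t ∈ Ioo 0 1) (hμK : μ univ < ENNReal.ofReal t ^ (1 / α) * μ K + μ K) :
    measSupport μ ⊆ (1 - t)⁻¹ • (K + (-t) • K) := by
  intro x hx
  rw [← ((hK.add (hK.smul _)).smul _).isClosed.closure_eq, mem_closure_iff]
  intro U hU hxU
  obtain ⟨_, ⟨_, ⟨p, hp, rfl⟩, _, ⟨k, hk, rfl⟩, rfl⟩, hpk⟩ :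
      (((1 - t) • U + t • K) ∩ K).Nonempty := by
    by_contra! h
    have hμU := hμ.rpow_mul_le_of_smul_add_subset hα hx hU hxU hK hKne ht
      (subset_compl_iff_disjoint_right.2 (disjoint_iff_inter_eq_empty.2 h))
    refine hμK.not_ge ?_
    rw [← measure_add_measure_compl hK.measurableSet, add_comm]
    gcongr
  refine ⟨p, hp, ?_⟩
  convert smul_mem_smul_set (a := (1 - t)⁻¹) (add_mem_add hpk (smul_mem_smul_set (a := -t) hk))
    using 1
  rw [neg_smul, add_neg_cancel_right, smul_smul, inv_mul_cancel₀ (by linarith [ht.2]), one_smul]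

theorem AlphaConcave.isCompact_measSupport [IsFiniteMeasure μ] [T2Space E] [ContinuousAdd E]
    [ContinuousConstSMul ℝ E] (hμ : AlphaConcave α μ) (hα : 0 < α) :
    IsCompact (measSupport μ) := by
  rcases eq_zero_or_neZero μ with rfl | hμ0
  · simp [measSupport_eq_support]
  set c := ENNReal.ofReal 2⁻¹ ^ (1 / α)
  have hc : c ≠ 0 := (ENNReal.rpow_pos (by norm_num) ENNReal.ofReal_ne_top).ne'
  obtain ⟨K, -, hK, hμK⟩ := MeasurableSet.univ.exists_lt_isCompact (μ := μ)
    (r := μ univ / (c + 1)) <| ENNReal.div_lt_of_lt_mul <| by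
      rw [mul_add, mul_one, add_comm]
      exact ENNReal.lt_add_right (measure_ne_top μ univ)
        (mul_ne_zero (Measure.measure_univ_ne_zero.2 (NeZero.ne μ)) hc)
  refine ((hK.add (hK.smul _)).smul _).of_isClosed_subset
    (measSupport_eq_support μ ▸ Measure.isClosed_support)
    (hμ.measSupport_subset_smul_add_smul hα hK
      (nonempty_of_measure_ne_zero (pos_of_gt hμK).ne')
      (t := 2⁻¹) ⟨by norm_num, by norm_num⟩ ?_)
  rw [ENNReal.div_lt_iff (by simp) (by simp [c])] at hμK
  calc μ univ < μ K * (c + 1) := hμK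
    _ = c * μ K + μ K := by ring

theorem AlphaConcave.rpow_mul_le_measure_preimage_ball {G : Type*} [SeminormedAddCommGroup G]
    [NormedSpace ℝ G] (hμ : AlphaConcave α μ) (hα : 0 < α) (F : E →L[ℝ] G) {y : E}
    (hy : y ∈ measSupport μ) {K : Set E} (hK : IsCompact K) (hKne : K.Nonempty) {R r t : ℝ}
    (hR : ∀ k ∈ K, dist (F k) (F y) ≤ R) (ht : t ∈ Ioo 0 1) (hr : 0 < r) (htR : t * R ≤ r / 2) :
    ENNReal.ofReal t ^ (1 / α) * μ K ≤ μ (F ⁻¹' Metric.ball (F y) r) := by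
  refine hμ.rpow_mul_le_of_smul_add_subset hα hy (Metric.isOpen_ball.preimage F.continuous)
    (Metric.mem_ball_self (half_pos hr)) hK hKne ht ?_
  rintro _ ⟨_, ⟨v, hv, rfl⟩, _, ⟨k, hk, rfl⟩, rfl⟩
  have hv : dist (F v) (F y) < r / 2 := hv
  obtain ⟨ht0, ht1⟩ := ht
  calc dist (F ((1 - t) • v + t • k)) (F y) = ‖(1 - t) • (F v - F y) + t • (F k - F y)‖ := by
        rw [dist_eq_norm, map_add, map_smul, map_smul]
        congr 1
        module
    _ ≤ (1 - t) * dist (F v) (F y) + t * dist (F k) (F y) := by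
        refine (norm_add_le _ _).trans_eq ?_
        rw [norm_smul, norm_smul, Real.norm_of_nonneg (by linarith), Real.norm_of_nonneg ht0.le,
          dist_eq_norm, dist_eq_norm]
    _ < r := by nlinarith [hR k hk, dist_nonneg (x := F v) (y := F y)]

theorem AlphaConcave.card_mul_rpow_mul_le_measure_univ {G ι : Type*} [SeminormedAddCommGroup G]
    [NormedSpace ℝ G] [Fintype ι] (hμ : AlphaConcave α μ) (hα : 0 < α) (F : E →L[ℝ] G)
    {y : ι → E} (hy : ∀ j, y j ∈ measSupport μ) {r : ℝ} (hr : 0 < r)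
    (hsep : Pairwise fun j j' => 2 * r ≤ dist (F (y j)) (F (y j'))) {K : Set E}
    (hK : IsCompact K) (hKne : K.Nonempty) {R t : ℝ} (hR : ∀ k ∈ K, ∀ j, dist (F k) (F (y j)) ≤ R)
    (ht : t ∈ Ioo 0 1) (htR : t * R ≤ r / 2) :
    Fintype.card ι * (ENNReal.ofReal t ^ (1 / α) * μ K) ≤ μ univ := by
  calc Fintype.card ι * (ENNReal.ofReal t ^ (1 / α) * μ K)
        = ∑ _j : ι, ENNReal.ofReal t ^ (1 / α) * μ K := by simp
    _ ≤ ∑ j, μ (F ⁻¹' Metric.ball (F (y j)) r) :=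
        Finset.sum_le_sum fun j _ => hμ.rpow_mul_le_measure_preimage_ball hα F (hy j) hK hKne
          (fun k hk => hR k hk j) ht hr htR
    _ ≤ μ univ := sum_measure_le_measure_univ
        (fun j _ => (Metric.isOpen_ball.preimage F.continuous).measurableSet.nullMeasurableSet)
        fun j _ j' _ h => ((Metric.ball_disjoint_ball (by linarith [hsep h])).preimage F).aedisjoint

theorem AlphaConcave.pow_mul_rpow_mul_le_measure_univ [ContinuousAdd E] [ContinuousSMul ℝ E]
    (hμ : AlphaConcave α μ) (hα : 0 < α) {N : ℕ} (hN : 0 < N) {x₀ : E}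
    (hx₀ : x₀ ∈ measSupport μ) {x : Fin N → E} (hx : ∀ i, x i ∈ measSupport μ)
    {F : E →L[ℝ] (Fin N → ℝ)} (hF : ∀ i, F (x i - x₀) = Pi.single i 1) {K : Set E}
    (hK : IsCompact K) (hKne : K.Nonempty) {R : ℝ}
    (hR : ∀ k ∈ K, ∀ y ∈ measSupport μ, dist (F k) (F y) ≤ R) {m : ℕ} (hm : 0 < m) :
    (m : ℝ≥0∞) ^ N * (ENNReal.ofReal ((4 * (R + 1) * N)⁻¹ / m) ^ (1 / α) * μ K) ≤ μ univ := by
  obtain ⟨k₀, hk₀⟩ := hKne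
  have hR0 : 0 ≤ R := dist_nonneg.trans (hR k₀ hk₀ x₀ hx₀)
  have hNr : (0 : ℝ) < N := Nat.cast_pos.2 hN
  set δ : ℝ := (N * m : ℝ)⁻¹
  have hδ : 0 < δ := by positivity
  have htδ : (4 * (R + 1) * N)⁻¹ / m = δ / (4 * (R + 1)) := by
    simp only [δ]
    field_simp
  have hδ1 : δ ≤ 1 := inv_le_one_of_one_le₀ (by exact_mod_cast Nat.mul_pos hN hm)
  let p : (Fin N → Fin m) → E := fun j => x₀ + ∑ i, ((j i : ℝ) * δ) • (x i - x₀)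
  have hpS : ∀ j, p j ∈ measSupport μ := by
    refine fun j => Convex.add_sum_smul_sub_mem (hμ.convex_measSupport hα) hx₀ hx
      (fun i => by positivity) ?_
    calc ∑ i, (j i : ℝ) * δ ≤ ∑ _i : Fin N, (N : ℝ)⁻¹ := Finset.sum_le_sum fun i _ => by
          calc (j i : ℝ) * δ ≤ m * δ := by gcongr; exact_mod_cast (j i).is_lt.le
            _ = (N : ℝ)⁻¹ := by simp only [δ]; field_simp
      _ = 1 := by simp [hNr.ne']
  have hFp : ∀ j, F (p j) = F x₀ + fun i => (j i : ℝ) * δ := by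
    intro j
    ext i
    simp [p, map_sum, hF, Pi.single_apply]
  have hsep : Pairwise fun j j' => 2 * (δ / 2) ≤ dist (F (p j)) (F (p j')) := by
    intro j j' hjj'
    obtain ⟨i, hi⟩ := Function.ne_iff.1 hjj'
    have hij : (1 : ℝ) ≤ |(j i : ℝ) - j' i| := by
      have h := Int.one_le_abs (sub_ne_zero.2 (Int.natCast_inj.not.2 (Fin.val_ne_of_ne hi)))
      exact_mod_cast h
    calc 2 * (δ / 2) = 1 * δ := by ring
      _ ≤ |(j i : ℝ) - j' i| * δ := by gcongr
      _ = dist (F (p j) i) (F (p j') i) := by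
        rw [hFp, hFp, Real.dist_eq]
        simp [← sub_mul, abs_mul, abs_of_pos hδ]
      _ ≤ dist (F (p j)) (F (p j')) := dist_le_pi_dist _ _ i
  have hcount := hμ.card_mul_rpow_mul_le_measure_univ hα F hpS (half_pos hδ) hsep hK ⟨k₀, hk₀⟩
    (fun k hk j => hR k hk _ (hpS j)) (t := (4 * (R + 1) * N)⁻¹ / m)
    ⟨by positivity, by rw [htδ, div_lt_one (by positivity)]; linarith⟩
    (by rw [htδ, div_mul_eq_mul_div, div_le_iff₀ (by positivity)]; nlinarith)
  simpa using hcount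

theorem AlphaConcave.finiteDimensional_vectorSpan_measSupport [IsFiniteMeasure μ] [T2Space E]
    [IsTopologicalAddGroup E] [ContinuousSMul ℝ E] [LocallyConvexSpace ℝ E]
    (hμ : AlphaConcave α μ) (hα : 0 < α) : FiniteDimensional ℝ (vectorSpan ℝ (measSupport μ)) := by
  rcases (measSupport μ).eq_empty_or_nonempty with hS | ⟨x₀, hx₀⟩
  · rw [hS, vectorSpan_empty]
    infer_instance
  by_contra hfd
  rw [vectorSpan_eq_span_vsub_set_right ℝ hx₀] at hfd
  set N := ⌈1 / α⌉₊ + 1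
  have hN : 1 / α + 1 ≤ N := by
    push_cast [N]
    linarith [Nat.le_ceil (1 / α)]
  obtain ⟨v, hvS, hv⟩ := exists_linearIndependent_fin_of_not_finiteDimensional_span hfd N
  choose x hxS hxv using hvS
  obtain ⟨F, hF⟩ := exists_continuousLinearMap_apply_eq_single hv
  obtain ⟨K, -, hK, hKpos⟩ :=
    MeasurableSet.univ.exists_lt_isCompact (hx₀ univ isOpen_univ (mem_univ x₀))
  obtain ⟨k₀, hk₀⟩ := nonempty_of_measure_ne_zero hKpos.ne'
  obtain ⟨R, hR⟩ := Metric.isBounded_iff.1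
    ((hK.union (hμ.isCompact_measSupport hα)).image F.continuous).isBounded
  have hR' : ∀ k ∈ K, ∀ y ∈ measSupport μ, dist (F k) (F y) ≤ R := fun k hk y hy =>
    hR (mem_image_of_mem F (Or.inl hk)) (mem_image_of_mem F (Or.inr hy))
  have hR0 : 0 ≤ R := dist_nonneg.trans (hR' k₀ hk₀ x₀ hx₀)
  exact ENNReal.not_forall_pow_mul_rpow_div_mul_le hα (b := (4 * (R + 1) * N)⁻¹) (by positivity)
    hN hKpos.ne' (measure_ne_top μ univ) fun m hm =>
      hμ.pow_mul_rpow_mul_le_measure_univ hα (by positivity) hx₀ hxS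
        (fun i => (congrArg F (hxv i)).trans (hF i)) hK ⟨k₀, hk₀⟩ hR' hm

end AlphaConcave

theorem alphaConcave_positive_alpha_finite_dimensional_compact_support_general
    {E : Type*} [AddCommGroup E] [Module ℝ E] [TopologicalSpace E] [IsTopologicalAddGroup E]
    [ContinuousSMul ℝ E] [LocallyConvexSpace ℝ E] [T2Space E]
    [MeasurableSpace E] [BorelSpace E]
    (α : ℝ) (hα : 0 < α)
    (μ : Measure E) [IsFiniteMeasure μ] [μ.InnerRegular] (hμ : AlphaConcave (↑α) μ) :
    IsCompact (measSupport μ) ∧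
    ∃ W : AffineSubspace ℝ E, FiniteDimensional ℝ W.direction ∧
      measSupport μ ⊆ (W : Set E) :=
  ⟨hμ.isCompact_measSupport hα, affineSpan ℝ (measSupport μ),
    (direction_affineSpan ℝ (measSupport μ)).symm ▸ hμ.finiteDimensional_vectorSpan_measSupport hα,
    subset_affineSpan ℝ _⟩

/-- **Theorem 2.4.** For `α > 0`, any `α`-concave finite Radon measure on a locally convex
Hausdorff space `E` is finite dimensional and compactly supported: its support is a compact
set contained in a finite-dimensional affine subspace of `E`. -/
theorem alphaConcave_positive_alpha_finite_dimensional_compact_support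
    {E : Type*} [AddCommGroup E] [Module ℝ E] [TopologicalSpace E] [IsTopologicalAddGroup E]
    [ContinuousSMul ℝ E] [LocallyConvexSpace ℝ E] [T2Space E]
    [MeasurableSpace E] [BorelSpace E]
    (α : ℝ) (hα : 0 < α) (hα1 : α ≤ 1)
    (μ : Measure E) [IsFiniteMeasure μ] [μ.InnerRegular] (hμ : AlphaConcave (↑α) μ) :
    IsCompact (measSupport μ) ∧
    ∃ W : AffineSubspace ℝ E, FiniteDimensional ℝ W.direction ∧
      measSupport μ ⊆ (W : Set E) :=
  alphaConcave_positive_alpha_finite_dimensional_compact_support_general α hα μ hμ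
end

section
/- Let E be a real Banach space and let (x_n, y_n, z_n), n ≥ 1, be triples of affinely independent points in E such that x_n → x, y_n → y, z_n → z, where x, y, z are also affinely independent. For each n, let λ_{x_n} and λ_{y_n} be the linear functionals on the two-dimensional subspace spanned by x_n - z_n and y_n - z_n determined by λ_{x_n}(x_n - z_n) = λ_{y_n}(y_n - z_n) = 1 and λ_{x_n}(y_n - z_n) = λ_{y_n}(x_n - z_n) = 0, each extended to continuous linear functionals on all of E with the same norm (via Hahn–Banach). Then sup_{n ≥ 1} ‖λ_{x_n}‖_* < ∞ and sup_{n ≥ 1} ‖λ_{y_n}‖_* < ∞, where ‖·‖_* denotes the dual norm. -/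
/-!
Fix functionals `F, G` biorthogonal to `x₀ - z₀, y₀ - z₀` (Hahn–Banach). By Cramer's rule the
functional `gₙ` in the span of `F, G` with `gₙ (xₙ - zₙ) = 1` and `gₙ (yₙ - zₙ) = 0` depends
continuously on `(xₙ - zₙ, yₙ - zₙ)` as long as the determinant does not vanish, so `gₙ → F`.
Minimality gives `‖fxₙ‖ ≤ ‖gₙ‖`, which is eventually bounded; symmetrically for `fyₙ`.
-/

open Filter Topology

theorem LinearIndependent.exists_biorthogonal_strongDual {𝕜 E ι : Type*} [RCLike 𝕜]
    [NormedAddCommGroup E] [NormedSpace 𝕜 E] [Finite ι] [DecidableEq ι]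
    {v : ι → E} (hv : LinearIndependent 𝕜 v) :
    ∃ F : ι → StrongDual 𝕜 E, ∀ i j, F i (v j) = if j = i then 1 else 0 := by
  have : FiniteDimensional 𝕜 (Submodule.span 𝕜 (Set.range v)) :=
    FiniteDimensional.span_of_finite 𝕜 (Set.finite_range v)
  let b := Module.Basis.span hv
  choose F hF _ using fun i ↦
    exists_extension_norm_eq _ (LinearMap.toContinuousLinearMap (b.coord i))
  refine ⟨F, fun i j ↦ ?_⟩
  have hFb := hF i (b j)
  rw [Module.Basis.span_apply] at hFb
  simp [hFb, b, Finsupp.single_apply]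

section Cramer

variable {𝕜 E : Type*} [NontriviallyNormedField 𝕜] [NormedAddCommGroup E] [NormedSpace 𝕜 E]

/-- Cramer's rule for the functional in the span of `F, G` with values `1` at `u` and `0` at `v`;
it is `0` when the determinant vanishes. -/
def cramerFunctional (F G : StrongDual 𝕜 E) (u v : E) : StrongDual 𝕜 E :=
  (F u * G v - F v * G u)⁻¹ • (G v • F - F v • G)

variable {F G : StrongDual 𝕜 E}

theorem cramerFunctional_apply_left {u v : E} (h : F u * G v - F v * G u ≠ 0) :
    cramerFunctional F G u v u = 1 := by
  simp only [cramerFunctional, smul_apply, sub_apply, smul_eq_mul]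
  field_simp

theorem cramerFunctional_apply_right (u v : E) : cramerFunctional F G u v v = 0 := by
  simp only [cramerFunctional, smul_apply, sub_apply, smul_eq_mul]
  ring

variable {α : Type*} {l : Filter α} {u v : α → E} {u₀ v₀ : E}

theorem tendsto_cramerDet (hFu : F u₀ = 1) (hFv : F v₀ = 0) (hGu : G u₀ = 0) (hGv : G v₀ = 1)
    (hu : Tendsto u l (𝓝 u₀)) (hv : Tendsto v l (𝓝 v₀)) :
    Tendsto (fun n ↦ F (u n) * G (v n) - F (v n) * G (u n)) l (𝓝 1) := by
  have := ((F.continuous.tendsto u₀).comp hu).mul ((G.continuous.tendsto v₀).comp hv) |>.sub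
    (((F.continuous.tendsto v₀).comp hv).mul ((G.continuous.tendsto u₀).comp hu))
  simpa [hFu, hFv, hGu, hGv] using this

theorem tendsto_cramerFunctional (hFu : F u₀ = 1) (hFv : F v₀ = 0) (hGu : G u₀ = 0)
    (hGv : G v₀ = 1) (hu : Tendsto u l (𝓝 u₀)) (hv : Tendsto v l (𝓝 v₀)) :
    Tendsto (fun n ↦ cramerFunctional F G (u n) (v n)) l (𝓝 F) := by
  have hdet := (tendsto_cramerDet hFu hFv hGu hGv hu hv).inv₀ one_ne_zero
  have := hdet.smul ((((G.continuous.tendsto v₀).comp hv).smul_const F).sub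
    (((F.continuous.tendsto v₀).comp hv).smul_const G))
  have hlim : (1 : 𝕜)⁻¹ • (G v₀ • F - F v₀ • G) = F := by ext; simp [hFv, hGv]
  rwa [hlim] at this

theorem exists_forall_norm_le_of_minimal_of_tendsto {u v : ℕ → E} (hFu : F u₀ = 1)
    (hFv : F v₀ = 0) (hGu : G u₀ = 0) (hGv : G v₀ = 1)
    (hu : Tendsto u atTop (𝓝 u₀)) (hv : Tendsto v atTop (𝓝 v₀)) {f : ℕ → StrongDual 𝕜 E}
    (hmin : ∀ n (g : StrongDual 𝕜 E), g (u n) = 1 → g (v n) = 0 → ‖f n‖ ≤ ‖g‖) :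
    ∃ C : ℝ, ∀ n, ‖f n‖ ≤ C := by
  have hdet := (tendsto_cramerDet hFu hFv hGu hGv hu hv).eventually_ne one_ne_zero
  have hle : ∀ᶠ n in atTop, ‖f n‖ ≤ ‖cramerFunctional F G (u n) (v n)‖ := hdet.mono fun n hn ↦
    hmin n _ (cramerFunctional_apply_left hn) (cramerFunctional_apply_right _ _)
  obtain ⟨C, hC⟩ := ((tendsto_cramerFunctional hFu hFv hGu hGv hu hv).norm
    |>.isBoundedUnder_le.mono_le hle).bddAbove_range
  exact ⟨C, fun n ↦ hC ⟨n, rfl⟩⟩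

end Cramer

theorem uniform_bound_for_hahn_banach_extensions_general
    {E : Type*} [NormedAddCommGroup E] [NormedSpace ℝ E]
    (x y z : ℕ → E) (x₀ y₀ z₀ : E)
    (hind₀ : LinearIndependent ℝ ![x₀ - z₀, y₀ - z₀])
    (hx : Tendsto x atTop (nhds x₀))
    (hy : Tendsto y atTop (nhds y₀))
    (hz : Tendsto z atTop (nhds z₀))
    (fx fy : ℕ → E →L[ℝ] ℝ)
    (hfxmin : ∀ n (g : E →L[ℝ] ℝ), g (x n - z n) = 1 → g (y n - z n) = 0 → ‖fx n‖ ≤ ‖g‖)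
    (hfymin : ∀ n (g : E →L[ℝ] ℝ), g (y n - z n) = 1 → g (x n - z n) = 0 → ‖fy n‖ ≤ ‖g‖) :
    (∃ C : ℝ, ∀ n, ‖fx n‖ ≤ C) ∧ (∃ C : ℝ, ∀ n, ‖fy n‖ ≤ C) := by
  obtain ⟨F, hF⟩ := hind₀.exists_biorthogonal_strongDual
  have hF0x : F 0 (x₀ - z₀) = 1 := by simpa using hF 0 0
  have hF0y : F 0 (y₀ - z₀) = 0 := by simpa using hF 0 1
  have hF1x : F 1 (x₀ - z₀) = 0 := by simpa using hF 1 0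
  have hF1y : F 1 (y₀ - z₀) = 1 := by simpa using hF 1 1
  have hu := hx.sub hz
  have hv := hy.sub hz
  exact ⟨exists_forall_norm_le_of_minimal_of_tendsto hF0x hF0y hF1x hF1y hu hv hfxmin,
    exists_forall_norm_le_of_minimal_of_tendsto hF1y hF1x hF0y hF0x hv hu hfymin⟩

/-- **Lemma 4.4.** Let `(xₙ, yₙ, zₙ)` be triples of affinely independent points of a real
Banach space `E` converging to an affinely independent triple `(x, y, z)`. For each `n`, let
`λ_{xₙ}, λ_{yₙ} : E →L[ℝ] ℝ` satisfy `λ_{xₙ}(xₙ - zₙ) = 1 = λ_{yₙ}(yₙ - zₙ)` and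
`λ_{xₙ}(yₙ - zₙ) = 0 = λ_{yₙ}(xₙ - zₙ)`, each being a norm-minimal (Hahn–Banach) extension,
i.e. of norm at most that of any continuous functional agreeing with it on the span of
`xₙ - zₙ` and `yₙ - zₙ`. Then the dual norms `‖λ_{xₙ}‖` and `‖λ_{yₙ}‖` are uniformly
bounded. -/
theorem uniform_bound_for_hahn_banach_extensions
    {E : Type*} [NormedAddCommGroup E] [NormedSpace ℝ E] [CompleteSpace E]
    (x y z : ℕ → E) (x₀ y₀ z₀ : E)
    (hind : ∀ n, LinearIndependent ℝ ![x n - z n, y n - z n])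
    (hind₀ : LinearIndependent ℝ ![x₀ - z₀, y₀ - z₀])
    (hx : Tendsto x atTop (nhds x₀))
    (hy : Tendsto y atTop (nhds y₀))
    (hz : Tendsto z atTop (nhds z₀))
    (fx fy : ℕ → E →L[ℝ] ℝ)
    (hfx1 : ∀ n, fx n (x n - z n) = 1) (hfx0 : ∀ n, fx n (y n - z n) = 0)
    (hfy1 : ∀ n, fy n (y n - z n) = 1) (hfy0 : ∀ n, fy n (x n - z n) = 0)
    (hfxmin : ∀ n (g : E →L[ℝ] ℝ), g (x n - z n) = 1 → g (y n - z n) = 0 → ‖fx n‖ ≤ ‖g‖)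
    (hfymin : ∀ n (g : E →L[ℝ] ℝ), g (y n - z n) = 1 → g (x n - z n) = 0 → ‖fy n‖ ≤ ‖g‖) :
    (∃ C : ℝ, ∀ n, ‖fx n‖ ≤ C) ∧ (∃ C : ℝ, ∀ n, ‖fy n‖ ≤ C) :=
  uniform_bound_for_hahn_banach_extensions_general x y z x₀ y₀ z₀ hind₀ hx hy hz fx fy hfxmin hfymin
end

section
/- Let F be a closed convex set in a locally convex Hausdorff real topological vector space E, and let δ ∈ [0,1]. If A ⊆ F is closed, then the set A_δ is closed as well. -/
/-!
For closed `A` the mass `m_[a,b](A)` is upper semicontinuous in the endpoints. Every `y ∈ A_δ`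
is an endpoint of the admissible segments `[a, y]` and `[y, a]` (`a ∈ F`), so the bound
`1 - δ` on their masses passes to every limit point `x` of `A_δ`. A segment `[a, b] ⊆ F`
through `x = (1 - t) a + t b` is then split at `x`: `m_[a,b] = t m_[a,x] + (1 - t) m_[x,b]`,
and both pieces give `A` mass at least `1 - δ`.
-/

open MeasureTheory Set Pointwise
open scoped ENNReal NNReal

/-- The uniform probability measure on the segment `[a, b]`: the image of Lebesgue measure
on `[0,1]` under `t ↦ (1-t)a + tb`. -/
noncomputable def segMeasure {E : Type*} [AddCommMonoid E] [Module ℝ E] [MeasurableSpace E]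
    (a b : E) : Measure E :=
  Measure.map (fun t : ℝ => (1 - t) • a + t • b) (volume.restrict (Icc (0 : ℝ) 1))

/-- For `A ⊆ F`, the set `A_δ` of points `x ∈ A` such that `m_Δ(A) ≥ 1 - δ` for every
segment `Δ = [a,b] ⊆ F` containing `x`. -/
def subdil {E : Type*} [AddCommMonoid E] [Module ℝ E] [MeasurableSpace E]
    (F A : Set E) (δ : ℝ) : Set E :=
  {x ∈ A | ∀ a b : E, a ∈ F → b ∈ F → x ∈ segment ℝ a b →
    ENNReal.ofReal (1 - δ) ≤ segMeasure a b A}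

open AffineMap (lineMap)

section Semicontinuity

variable {X Y Z : Type*} [TopologicalSpace X] [TopologicalSpace Y] [TopologicalSpace Z]
  [MeasurableSpace Y] {ν : Measure Y} {f : X → Y → Z}

/-- Inner regularity gives a compact `K ⊆ f x ⁻¹' U` of almost full measure, and the tube lemma
keeps `K` inside `f x' ⁻¹' U` for `x'` near `x`. -/
theorem lowerSemicontinuous_measure_preimage [ν.Regular] (hf : Continuous (Function.uncurry f))
    {U : Set Z} (hU : IsOpen U) : LowerSemicontinuous fun x => ν (f x ⁻¹' U) := by
  intro x c hc
  obtain ⟨K, hKU, hK, hcK⟩ := (hU.preimage (hf.uncurry_left x)).exists_lt_isCompact hc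
  obtain ⟨V, W, hV, -, hxV, hKW, hVW⟩ :=
    generalized_tube_lemma isCompact_singleton hK (hU.preimage hf) (by
      rintro ⟨x', y⟩ ⟨rfl, hy⟩
      exact hKU hy)
  filter_upwards [hV.mem_nhds (hxV rfl)] with x' hx'
  exact hcK.trans_le (measure_mono fun y hy => hVW (mk_mem_prod hx' (hKW hy)))

theorem upperSemicontinuous_measure_preimage [OpensMeasurableSpace Y] [IsFiniteMeasure ν]
    [ν.Regular] (hf : Continuous (Function.uncurry f)) {A : Set Z} (hA : IsClosed A) :
    UpperSemicontinuous fun x => ν (f x ⁻¹' A) := by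
  have hcompl : (fun x => ν (f x ⁻¹' A)) = (ν univ - ·) ∘ fun x => ν (f x ⁻¹' Aᶜ) := by
    funext x
    rw [Function.comp_apply, ← measure_compl
      (hA.isOpen_compl.preimage (hf.uncurry_left x)).measurableSet (measure_ne_top _ _),
      preimage_compl, compl_compl]
  rw [hcompl]
  exact (ENNReal.continuous_sub_left (measure_ne_top ν univ)).comp_lowerSemicontinuous_antitone
    (lowerSemicontinuous_measure_preimage hf hA.isOpen_compl) fun _ _ h => tsub_le_tsub_left h _

end Semicontinuity

theorem Real.map_lineMap_volume {s s' : ℝ} (h : s < s') :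
    volume.map (lineMap s s' : ℝ →ᵃ[ℝ] ℝ) = ENNReal.ofReal (s' - s)⁻¹ • volume := by
  have hlin : ((lineMap s s' : ℝ →ᵃ[ℝ] ℝ) : ℝ → ℝ) = (· + s) ∘ (· * (s' - s)) := by
    funext u
    simp [AffineMap.lineMap_apply_ring']
  rw [hlin, ← Measure.map_map (by fun_prop) (by fun_prop), Real.map_volume_mul_right
    (sub_pos.2 h).ne', Measure.map_smul, map_add_right_eq_self, abs_of_pos (by simpa using h)]

theorem Real.volume_restrict_Icc_eq_smul_map_lineMap {s s' : ℝ} (h : s ≤ s') :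
    volume.restrict (Icc s s') =
      ENNReal.ofReal (s' - s) • (volume.restrict (Icc 0 1)).map (lineMap s s' : ℝ →ᵃ[ℝ] ℝ) := by
  rcases h.eq_or_lt with rfl | h
  · simp
  have hpre : (lineMap s s' : ℝ →ᵃ[ℝ] ℝ) ⁻¹' Icc s s' = Icc (0 : ℝ) 1 := by
    ext u
    simp only [mem_preimage, mem_Icc, left_le_lineMap_iff_nonneg h,
      lineMap_le_right_iff_le_one h]
  have hr : 0 < s' - s := sub_pos.2 h
  rw [← hpre, ← Measure.restrict_map (by fun_prop) measurableSet_Icc, Real.map_lineMap_volume h,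
    Measure.restrict_smul, smul_smul, ← ENNReal.ofReal_mul hr.le, mul_inv_cancel₀ hr.ne',
    ENNReal.ofReal_one, one_smul]

theorem segMeasure_eq_map_lineMap {E : Type*} [AddCommGroup E] [Module ℝ E] [MeasurableSpace E]
    (a b : E) :
    segMeasure a b = (volume.restrict (Icc (0 : ℝ) 1)).map (lineMap a b : ℝ →ᵃ[ℝ] E) := by
  rw [segMeasure]
  congr 1
  funext t
  exact (AffineMap.lineMap_apply_module a b t).symm

section SegMeasure

variable {E : Type*} [AddCommGroup E] [Module ℝ E] [TopologicalSpace E] [IsTopologicalAddGroup E]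
  [ContinuousSMul ℝ E] [MeasurableSpace E] [BorelSpace E]

theorem map_lineMap_volume_restrict_Icc (a b : E) {s s' : ℝ} (h : s ≤ s') :
    (volume.restrict (Icc s s')).map (lineMap a b : ℝ →ᵃ[ℝ] E) =
      ENNReal.ofReal (s' - s) • segMeasure (lineMap a b s) (lineMap a b s') := by
  rw [Real.volume_restrict_Icc_eq_smul_map_lineMap h, Measure.map_smul,
    Measure.map_map AffineMap.lineMap_continuous.measurable (by fun_prop),
    segMeasure_eq_map_lineMap]
  congr 2
  funext u
  exact (lineMap a b).apply_lineMap s s' u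

theorem segMeasure_eq_add (a b : E) {t : ℝ} (ht : t ∈ Icc (0 : ℝ) 1) :
    segMeasure a b = ENNReal.ofReal t • segMeasure a (lineMap a b t) +
      ENNReal.ofReal (1 - t) • segMeasure (lineMap a b t) b := by
  have hsplit : volume.restrict (Icc (0 : ℝ) 1) =
      volume.restrict (Icc 0 t) + volume.restrict (Icc t 1) := by
    have hnull : AEDisjoint volume (Icc 0 t) (Icc t 1) := by
      rw [AEDisjoint, Icc_inter_Icc_eq_singleton ht.1 ht.2, measure_singleton]
    rw [← Icc_union_Icc_eq_Icc ht.1 ht.2,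
      Measure.restrict_union₀ hnull measurableSet_Icc.nullMeasurableSet]
  rw [segMeasure_eq_map_lineMap, hsplit,
    Measure.map_add _ _ AffineMap.lineMap_continuous.measurable,
    map_lineMap_volume_restrict_Icc a b ht.1, map_lineMap_volume_restrict_Icc a b ht.2,
    AffineMap.lineMap_apply_zero, AffineMap.lineMap_apply_one, sub_zero]

theorem upperSemicontinuous_segMeasure {X : Type*} [TopologicalSpace X] {g h : X → E}
    (hg : Continuous g) (hh : Continuous h) {A : Set E} (hA : IsClosed A) :
    UpperSemicontinuous fun x => segMeasure (g x) (h x) A := by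
  have hmap (x : X) : segMeasure (g x) (h x) A =
      volume.restrict (Icc (0 : ℝ) 1) ((fun t : ℝ => (1 - t) • g x + t • h x) ⁻¹' A) :=
    Measure.map_apply (Continuous.measurable (by fun_prop)) hA.measurableSet
  simp only [hmap]
  exact upperSemicontinuous_measure_preimage (f := fun x (t : ℝ) => (1 - t) • g x + t • h x)
    (by fun_prop) hA

theorem le_segMeasure_of_mem_closure_subdil {F A : Set E} (hAF : A ⊆ F) (hA : IsClosed A)
    {δ : ℝ} {a x : E} (ha : a ∈ F) (hx : x ∈ closure (subdil F A δ)) :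
    ENNReal.ofReal (1 - δ) ≤ segMeasure a x A ∧ ENNReal.ofReal (1 - δ) ≤ segMeasure x a A := by
  have hclosed {g h : E → E} (hg : Continuous g) (hh : Continuous h)
      (hsub : subdil F A δ ⊆ {y | ENNReal.ofReal (1 - δ) ≤ segMeasure (g y) (h y) A}) :
      ENNReal.ofReal (1 - δ) ≤ segMeasure (g x) (h x) A :=
    closure_minimal hsub ((upperSemicontinuous_segMeasure hg hh hA).isClosed_preimage _) hx
  exact ⟨hclosed continuous_const continuous_id fun y hy =>
      hy.2 a y ha (hAF hy.1) (right_mem_segment ℝ a y),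
    hclosed continuous_id continuous_const fun y hy =>
      hy.2 y a (hAF hy.1) ha (left_mem_segment ℝ y a)⟩

end SegMeasure

theorem subdil_isClosed_general
    {E : Type*} [AddCommGroup E] [Module ℝ E] [TopologicalSpace E] [IsTopologicalAddGroup E]
    [ContinuousSMul ℝ E]
    [MeasurableSpace E] [BorelSpace E]
    (F : Set E)
    (A : Set E) (hAF : A ⊆ F) (hA : IsClosed A)
    (δ : ℝ) :
    IsClosed (subdil F A δ) := by
  refine isClosed_of_closure_subset fun x hx => ⟨?_, fun a b ha hb hxab => ?_⟩
  · exact hA.closure_subset (closure_mono (fun y hy => hy.1) hx)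
  obtain ⟨t, ht, rfl⟩ := (segment_eq_image_lineMap ℝ a b).subset hxab
  have hleft := (le_segMeasure_of_mem_closure_subdil hAF hA ha hx).1
  have hright := (le_segMeasure_of_mem_closure_subdil hAF hA hb hx).2
  rw [segMeasure_eq_add a b ht, Measure.add_apply, Measure.smul_apply, Measure.smul_apply,
    smul_eq_mul, smul_eq_mul]
  calc ENNReal.ofReal (1 - δ)
      = ENNReal.ofReal t * ENNReal.ofReal (1 - δ) +
          ENNReal.ofReal (1 - t) * ENNReal.ofReal (1 - δ) := by
        rw [← add_mul, ← ENNReal.ofReal_add ht.1 (sub_nonneg.2 ht.2), add_sub_cancel,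
          ENNReal.ofReal_one, one_mul]
    _ ≤ _ := by gcongr

/-- **Lemma 5.1 a).** Let `F` be a closed convex set in a locally convex Hausdorff space
`E`, and `δ ∈ [0,1]`. If `A ⊆ F` is closed, then `A_δ` is closed as well. -/
theorem subdil_isClosed
    {E : Type*} [AddCommGroup E] [Module ℝ E] [TopologicalSpace E] [IsTopologicalAddGroup E]
    [ContinuousSMul ℝ E] [LocallyConvexSpace ℝ E] [T2Space E]
    [MeasurableSpace E] [BorelSpace E]
    (F : Set E) (hF : IsClosed F) (hFc : Convex ℝ F)
    (A : Set E) (hAF : A ⊆ F) (hA : IsClosed A)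
    (δ : ℝ) (hδ : δ ∈ Icc (0 : ℝ) 1) :
    IsClosed (subdil F A δ) :=
  subdil_isClosed_general F A hAF hA δ
end

section
/- Let F be a convex closed set in a locally convex Hausdorff real topological vector space E, and let T be a continuous linear map from E to another locally convex Hausdorff real topological vector space E_1. For any δ ∈ [0,1) and any Borel set C ⊆ T(F), one has (T^{-1}(C) ∩ F)^δ = T^{-1}(C^δ) ∩ F, where the dilation B^δ on the left is taken with respect to F and the dilation C^δ on the right is taken with respect to the image T(F). -/
/-!
For `x, y ∈ F` the segment measure `m_{[x,y]}` is carried by `[x, y] ⊆ F` (convexity), and its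
image under `T` is `m_{[Tx,Ty]}`. Hence `m_{[x,y]}(T⁻¹C ∩ F) = m_{[Tx,Ty]}(C)`, and since the
points of `T(F)` are exactly the `Ty` with `y ∈ F`, both sides of the identity are the same
set of `x ∈ F`.
-/

open MeasureTheory Set Pointwise
open scoped ENNReal NNReal

/-- For `B ⊆ F`, the dilation `B^δ = {x ∈ F : m_{[x,y]}(B) > δ for some y ∈ F}`. -/
def dil {E : Type*} [AddCommMonoid E] [Module ℝ E] [MeasurableSpace E]
    (F B : Set E) (δ : ℝ) : Set E :=
  {x ∈ F | ∃ y ∈ F, ENNReal.ofReal δ < segMeasure x y B}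

/-- No measurability of `F` is needed: the image measure of any set is bounded below by the
mass of its preimage. -/
theorem MeasureTheory.Measure.map_apply_inter_of_ae_mem {α β : Type*} [MeasurableSpace α]
    [MeasurableSpace β] {μ : Measure α} {f : α → β} (hf : AEMeasurable f μ) {A : Set β}
    (hA : MeasurableSet A) {F : Set β} (hF : ∀ᵐ a ∂μ, f a ∈ F) :
    μ.map f (A ∩ F) = μ.map f A := by
  refine le_antisymm (measure_mono inter_subset_left) ?_
  have hpre : f ⁻¹' (A ∩ F) =ᵐ[μ] f ⁻¹' A := by
    filter_upwards [hF] with a ha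
    exact propext (and_iff_left ha)
  calc μ.map f A = μ (f ⁻¹' A) := Measure.map_apply_of_aemeasurable hf hA
    _ = μ (f ⁻¹' (A ∩ F)) := (measure_congr hpre).symm
    _ ≤ μ.map f (A ∩ F) := Measure.le_map_apply hf _

section Segment

variable {E : Type*} [AddCommGroup E] [Module ℝ E]

theorem ae_segmentParam_mem_of_convex {F : Set E} (hFc : Convex ℝ F) {x y : E}
    (hx : x ∈ F) (hy : y ∈ F) :
    ∀ᵐ t ∂(volume.restrict (Icc (0 : ℝ) 1)), (1 - t) • x + t • y ∈ F :=
  ae_restrict_of_forall_mem measurableSet_Icc fun _ ht =>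
    hFc hx hy (by linarith [ht.2]) ht.1 (by ring)

variable [TopologicalSpace E] [ContinuousAdd E] [ContinuousSMul ℝ E] [MeasurableSpace E]
  [BorelSpace E]

theorem measurable_segmentParam (x y : E) :
    Measurable (fun t : ℝ => (1 - t) • x + t • y) :=
  (by fun_prop : Continuous fun t : ℝ => (1 - t) • x + t • y).measurable

theorem segMeasure_inter_of_convex {F A : Set E} (hFc : Convex ℝ F) (hA : MeasurableSet A)
    {x y : E} (hx : x ∈ F) (hy : y ∈ F) :
    segMeasure x y (A ∩ F) = segMeasure x y A :=
  Measure.map_apply_inter_of_ae_mem (measurable_segmentParam x y).aemeasurable hA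
    (ae_segmentParam_mem_of_convex hFc hx hy)

variable {E₁ : Type*} [AddCommGroup E₁] [Module ℝ E₁] [TopologicalSpace E₁]
  [MeasurableSpace E₁] [BorelSpace E₁]

theorem map_segMeasure (T : E →L[ℝ] E₁) (x y : E) :
    (segMeasure x y).map T = segMeasure (T x) (T y) := by
  rw [segMeasure, Measure.map_map T.continuous.measurable (measurable_segmentParam x y)]
  congr 1
  ext t
  simp

theorem segMeasure_preimage_inter_of_convex (T : E →L[ℝ] E₁) {F : Set E} (hFc : Convex ℝ F)
    {C : Set E₁} (hC : MeasurableSet C) {x y : E} (hx : x ∈ F) (hy : y ∈ F) :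
    segMeasure x y (T ⁻¹' C ∩ F) = segMeasure (T x) (T y) C := by
  rw [segMeasure_inter_of_convex hFc (hC.preimage T.continuous.measurable) hx hy,
    ← map_segMeasure, Measure.map_apply T.continuous.measurable hC]

end Segment

theorem dil_preimage_of_continuous_linear_map_general
    {E : Type*} [AddCommGroup E] [Module ℝ E] [TopologicalSpace E] [IsTopologicalAddGroup E]
    [ContinuousSMul ℝ E]
    [MeasurableSpace E] [BorelSpace E]
    {E₁ : Type*} [AddCommGroup E₁] [Module ℝ E₁] [TopologicalSpace E₁]
    [MeasurableSpace E₁] [BorelSpace E₁]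
    (T : E →L[ℝ] E₁)
    (F : Set E) (hFc : Convex ℝ F)
    (C : Set E₁) (hC : MeasurableSet C)
    (δ : ℝ) :
    dil F (T ⁻¹' C ∩ F) δ = T ⁻¹' (dil (T '' F) C δ) ∩ F := by
  ext x
  simp only [dil, mem_ofPred_eq, mem_inter_iff, mem_preimage, exists_mem_image]
  constructor
  · rintro ⟨hx, y, hy, hlt⟩
    rw [segMeasure_preimage_inter_of_convex T hFc hC hx hy] at hlt
    exact ⟨⟨mem_image_of_mem T hx, y, hy, hlt⟩, hx⟩
  · rintro ⟨⟨-, y, hy, hlt⟩, hx⟩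
    rw [← segMeasure_preimage_inter_of_convex T hFc hC hx hy] at hlt
    exact ⟨hx, y, hy, hlt⟩

/-- **Lemma 5.3.** Let `F` be a convex closed set in a locally convex Hausdorff space `E`,
and `T : E → E₁` a continuous linear map into another locally convex Hausdorff space. For
any `δ ∈ [0,1)` and any Borel set `C ⊆ T(F)`, one has
`(T⁻¹(C) ∩ F)^δ = T⁻¹(C^δ) ∩ F`, where the left dilation is taken with respect to `F` and
the right one with respect to `T(F)`. -/
theorem dil_preimage_of_continuous_linear_map
    {E : Type*} [AddCommGroup E] [Module ℝ E] [TopologicalSpace E] [IsTopologicalAddGroup E]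
    [ContinuousSMul ℝ E] [LocallyConvexSpace ℝ E] [T2Space E]
    [MeasurableSpace E] [BorelSpace E]
    {E₁ : Type*} [AddCommGroup E₁] [Module ℝ E₁] [TopologicalSpace E₁]
    [IsTopologicalAddGroup E₁] [ContinuousSMul ℝ E₁] [LocallyConvexSpace ℝ E₁] [T2Space E₁]
    [MeasurableSpace E₁] [BorelSpace E₁]
    (T : E →L[ℝ] E₁)
    (F : Set E) (hF : IsClosed F) (hFc : Convex ℝ F)
    (C : Set E₁) (hC : MeasurableSet C) (hCF : C ⊆ T '' F)
    (δ : ℝ) (hδ : δ ∈ Ico (0 : ℝ) 1) :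
    dil F (T ⁻¹' C ∩ F) δ = T ⁻¹' (dil (T '' F) C δ) ∩ F :=
  dil_preimage_of_continuous_linear_map_general T F hFc C hC δ
end
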